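/- For $h\in(0,1/2]$ and $q\in(0,1]$ let $c_k(h,q)=\sqrt{1-\exp\big(-\tfrac{2h^2}{1-h}(qk^2+\tfrac{1}{q})\big)}\,\exp\big(-hqk^2-\tfrac{h}{q}\big)$ for $k\in\mathbb{Z}$. Then for every fixed $h\in(0,1/2]$, $\lim_{q\to 0^+}\; q\cdot\frac{\sum_{k\in\mathbb{Z}}k^2 c_k(h,q)^2}{\sum_{k\in\mathbb{Z}}c_k(h,q)^2} = \frac{1}{4h}$. -/

import Mathlib

open Filter

open MeasureTheory Real Set Topology

noncomputable section

section AuxLemmas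

lemma abs_tsum_sub_integral_le (g g' : ℝ → ℝ) (hd : ∀ x, HasDerivAt g (g' x) x)
    (hg : Integrable g) (hg' : Integrable g') (hs : Summable fun k : ℤ => g (k : ℝ)) :
    |(∑' k : ℤ, g (k : ℝ)) - ∫ x, g x| ≤ ∫ x, |g' x| := by
  set I : ℤ → ℝ := fun k => ∫ x in Ioc (k : ℝ) (k + 1), g x with hI
  set J : ℤ → ℝ := fun k => ∫ x in Ioc (k : ℝ) (k + 1), |g' x| with hJ
  have hmeas : ∀ k : ℤ, MeasurableSet (Ioc (k : ℝ) (k + 1)) := fun k => measurableSet_Ioc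
  have hdisj : Pairwise (Function.onFun Disjoint fun k : ℤ => Ioc (k : ℝ) (k + 1)) :=
    pairwise_disjoint_Ioc_intCast ℝ
  have hunion : (⋃ k : ℤ, Ioc (k : ℝ) (k + 1)) = univ := iUnion_Ioc_intCast ℝ
  have hIsum : HasSum I (∫ x, g x) := by
    have := hasSum_integral_iUnion (μ := volume) (f := g) hmeas hdisj
      (by rw [hunion]; exact hg.integrableOn)
    rwa [hunion, setIntegral_univ] at this
  have hJsum : HasSum J (∫ x, |g' x|) := by
    have := hasSum_integral_iUnion (μ := volume) (f := fun x => |g' x|) hmeas hdisj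
      (by rw [hunion]; exact hg'.abs.integrableOn)
    rwa [hunion, setIntegral_univ] at this
  have hvol : ∀ k : ℤ, (volume (Ioc (k : ℝ) (k + 1))).toReal = 1 := by
    intro k; rw [Real.volume_Ioc]; norm_num
  have key : ∀ k : ℤ, |g (k : ℝ) - I k| ≤ J k := by
    intro k
    have hconst : IntegrableOn (fun _ : ℝ => g (k : ℝ)) (Ioc (k : ℝ) (k + 1)) := by
      refine integrableOn_const ?_
      rw [Real.volume_Ioc]; exact ENNReal.ofReal_ne_top
    have hsub : g (k : ℝ) - I k = ∫ x in Ioc (k : ℝ) (k + 1), (g (k : ℝ) - g x) := by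
      rw [integral_sub hconst hg.integrableOn, setIntegral_const, measureReal_def, hvol k, one_smul]
    have hptwise : ∀ x ∈ Ioc (k : ℝ) (k + 1), |g (k : ℝ) - g x| ≤ J k := by
      intro x hx
      have hle : (k : ℝ) ≤ x := le_of_lt hx.1
      have hftc : ∫ t in (k : ℝ)..x, g' t = g x - g (k : ℝ) :=
        intervalIntegral.integral_eq_sub_of_hasDerivAt (fun t _ => hd t)
          (hg'.intervalIntegrable)
      rw [abs_sub_comm, ← hftc]
      calc |∫ t in (k : ℝ)..x, g' t| ≤ ∫ t in (k : ℝ)..x, |g' t| :=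
            intervalIntegral.abs_integral_le_integral_abs hle
        _ = ∫ t in Ioc (k : ℝ) x, |g' t| := intervalIntegral.integral_of_le hle
        _ ≤ J k := by
            apply setIntegral_mono_set hg'.abs.integrableOn
            · exact Eventually.of_forall fun t => abs_nonneg _
            · exact HasSubset.Subset.eventuallyLE (Ioc_subset_Ioc le_rfl hx.2)
    rw [hsub]
    calc |∫ x in Ioc (k : ℝ) (k + 1), (g (k : ℝ) - g x)|
        ≤ ∫ x in Ioc (k : ℝ) (k + 1), |g (k : ℝ) - g x| := by
          simpa [Real.norm_eq_abs] using
            norm_integral_le_integral_norm (μ := volume.restrict (Ioc (k : ℝ) (k + 1)))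
              (fun x => g (k : ℝ) - g x)
      _ ≤ ∫ _x in Ioc (k : ℝ) (k + 1), J k := by
          apply setIntegral_mono_on ((hconst.sub hg.integrableOn).abs)
            (integrableOn_const (by rw [Real.volume_Ioc]; exact ENNReal.ofReal_ne_top))
            (hmeas k)
          exact hptwise
      _ = J k := by rw [setIntegral_const, measureReal_def, hvol k, one_smul]
  have habs_summable : Summable (fun k : ℤ => |g (k : ℝ) - I k|) :=
    Summable.of_nonneg_of_le (fun k => abs_nonneg _) key hJsum.summable
  have hsum2 : Summable (fun k : ℤ => g (k : ℝ) - I k) := by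
    refine Summable.of_norm ?_
    simpa [Real.norm_eq_abs] using habs_summable
  calc |(∑' k : ℤ, g (k : ℝ)) - ∫ x, g x|
      = |∑' k : ℤ, (g (k : ℝ) - I k)| := by rw [Summable.tsum_sub hs hIsum.summable, hIsum.tsum_eq]
    _ ≤ ∑' k : ℤ, |g (k : ℝ) - I k| := by
        have h1 : Summable (fun k : ℤ => ‖g (k : ℝ) - I k‖) := by
          simpa [Real.norm_eq_abs] using habs_summable
        have := norm_tsum_le_tsum_norm (f := fun k : ℤ => g (k : ℝ) - I k) h1
        simpa [Real.norm_eq_abs] using this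
    _ ≤ ∑' k : ℤ, J k := Summable.tsum_le_tsum key habs_summable hJsum.summable
    _ = ∫ x, |g' x| := hJsum.tsum_eq

lemma hasDerivAt_E (s x : ℝ) :
    HasDerivAt (fun x : ℝ => Real.exp (-s * x ^ 2)) (-s * (2 * x) * Real.exp (-s * x ^ 2)) x := by
  have h : HasDerivAt (fun x : ℝ => -s * x ^ 2) (-s * (2 * x)) x := by
    simpa using ((hasDerivAt_pow 2 x).const_mul (-s))
  simpa [mul_comm] using h.exp

lemma tendsto_pow_mul_exp (s : ℝ) (hb : 0 < s) (n : ℕ) :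
    Tendsto (fun x : ℝ => x ^ n * Real.exp (-s * x ^ 2)) atTop (𝓝 0) := by
  have h := rpow_mul_exp_neg_mul_sq_isLittleO_exp_neg hb (n : ℝ)
  have h2 : Tendsto (fun x : ℝ => Real.exp (-(1 / 2) * x)) atTop (𝓝 0) := by
    apply Real.tendsto_exp_atBot.comp
    exact Tendsto.const_mul_atTop_of_neg (by norm_num) tendsto_id
  have h3 := h.tendsto_zero_of_tendsto h2
  simpa [Real.rpow_natCast] using h3

lemma integrable_sq_exp (s : ℝ) (hb : 0 < s) :
    Integrable (fun x : ℝ => x ^ 2 * Real.exp (-s * x ^ 2)) := by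
  have h := integrable_rpow_mul_exp_neg_mul_sq (b := s) (s := (2:ℝ)) hb (by norm_num)
  apply h.congr
  filter_upwards with x
  rw [show ((2:ℝ)) = ((2:ℕ):ℝ) by norm_num, Real.rpow_natCast]
lemma integrable_cube_exp (s : ℝ) (hb : 0 < s) :
    Integrable (fun x : ℝ => x ^ 3 * Real.exp (-s * x ^ 2)) := by
  have h := integrable_rpow_mul_exp_neg_mul_sq (b := s) (s := (3:ℝ)) hb (by norm_num)
  apply h.congr
  filter_upwards with x
  rw [show ((3:ℝ)) = ((3:ℕ):ℝ) by norm_num, Real.rpow_natCast]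

lemma integral_Ioi_mul_exp (s : ℝ) (hb : 0 < s) :
    ∫ x in Ioi (0 : ℝ), x * Real.exp (-s * x ^ 2) = 1 / (2 * s) := by
  have hF : ∀ x : ℝ, HasDerivAt (fun x : ℝ => -(1 / (2 * s)) * Real.exp (-s * x ^ 2))
      (x * Real.exp (-s * x ^ 2)) x := by
    intro x
    have := (hasDerivAt_E s x).const_mul (-(1 / (2 * s)))
    refine this.congr_deriv ?_
    field_simp
  have htend : Tendsto (fun x : ℝ => -(1 / (2 * s)) * Real.exp (-s * x ^ 2)) atTop (𝓝 0) := by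
    have := (tendsto_pow_mul_exp s hb 0).const_mul (-(1 / (2 * s)))
    simpa using this
  have := integral_Ioi_of_hasDerivAt_of_tendsto' (a := 0) (fun x _ => hF x)
    (integrable_mul_exp_neg_mul_sq hb).integrableOn htend
  rw [this]
  simp

lemma integral_Ioi_cube_exp (s : ℝ) (hb : 0 < s) :
    ∫ x in Ioi (0 : ℝ), x ^ 3 * Real.exp (-s * x ^ 2) = 1 / (2 * s ^ 2) := by
  have hF : ∀ x : ℝ, HasDerivAt
      (fun x : ℝ => -(x ^ 2 / (2 * s) + 1 / (2 * s ^ 2)) * Real.exp (-s * x ^ 2))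
      (x ^ 3 * Real.exp (-s * x ^ 2)) x := by
    intro x
    have h1 : HasDerivAt (fun x : ℝ => -(x ^ 2 / (2 * s) + 1 / (2 * s ^ 2)))
        (-(2 * x / (2 * s))) x := by
      have := ((hasDerivAt_pow 2 x).div_const (2 * s)).add_const (1 / (2 * s ^ 2))
      exact this.neg.congr_deriv (by norm_num)
    have := h1.mul (hasDerivAt_E s x)
    refine this.congr_deriv ?_
    field_simp
    ring
  have htend : Tendsto
      (fun x : ℝ => -(x ^ 2 / (2 * s) + 1 / (2 * s ^ 2)) * Real.exp (-s * x ^ 2)) atTop (𝓝 0) := by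
    have h2 := (tendsto_pow_mul_exp s hb 2).const_mul (-(1 / (2 * s)))
    have h0 := (tendsto_pow_mul_exp s hb 0).const_mul (-(1 / (2 * s ^ 2)))
    have := h2.add h0
    simp only [mul_zero, add_zero] at this
    apply this.congr
    intro x
    ring
  have := integral_Ioi_of_hasDerivAt_of_tendsto' (a := 0) (fun x _ => hF x)
    (integrable_cube_exp s hb).integrableOn htend
  rw [this]
  field_simp
  simp

lemma integral_abs_mul_exp (s : ℝ) (hb : 0 < s) :
    ∫ x : ℝ, |x| * Real.exp (-s * x ^ 2) = 1 / s := by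
  have h : (∫ x : ℝ, |x| * Real.exp (-s * x ^ 2))
      = ∫ x : ℝ, (fun t : ℝ => t * Real.exp (-s * t ^ 2)) |x| := by
    congr 1; funext x; simp [sq_abs]
  rw [h, integral_comp_abs (f := fun t : ℝ => t * Real.exp (-s * t ^ 2)), integral_Ioi_mul_exp s hb]
  ring

lemma integral_abs_cube_exp (s : ℝ) (hb : 0 < s) :
    ∫ x : ℝ, |x| ^ 3 * Real.exp (-s * x ^ 2) = 1 / s ^ 2 := by
  have h : (∫ x : ℝ, |x| ^ 3 * Real.exp (-s * x ^ 2))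
      = ∫ x : ℝ, (fun t : ℝ => t ^ 3 * Real.exp (-s * t ^ 2)) |x| := by
    congr 1; funext x; simp [sq_abs]
  rw [h, integral_comp_abs (f := fun t : ℝ => t ^ 3 * Real.exp (-s * t ^ 2)), integral_Ioi_cube_exp s hb]
  ring

lemma integral_Ioi_exp (s : ℝ) (hb : 0 < s) :
    ∫ x in Ioi (0 : ℝ), Real.exp (-s * x ^ 2) = Real.sqrt (π / s) / 2 := by
  have h : (∫ x : ℝ, Real.exp (-s * x ^ 2))
      = ∫ x : ℝ, (fun t : ℝ => Real.exp (-s * t ^ 2)) |x| := by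
    congr 1; funext x; simp [sq_abs]
  have h2 := integral_comp_abs (f := fun t : ℝ => Real.exp (-s * t ^ 2))
  rw [← h, integral_gaussian] at h2
  linarith

lemma integral_sq_exp (s : ℝ) (hb : 0 < s) :
    ∫ x : ℝ, x ^ 2 * Real.exp (-s * x ^ 2) = Real.sqrt (π / s) / (2 * s) := by
  have hF : ∀ x : ℝ, HasDerivAt (fun x : ℝ => -(x / (2 * s)) * Real.exp (-s * x ^ 2))
      (x ^ 2 * Real.exp (-s * x ^ 2) - 1 / (2 * s) * Real.exp (-s * x ^ 2)) x := by
    intro x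
    have h1 : HasDerivAt (fun x : ℝ => -(x / (2 * s))) (-(1 / (2 * s))) x := by
      exact ((hasDerivAt_id x).div_const (2 * s)).neg.congr_deriv (by norm_num)
    have := h1.mul (hasDerivAt_E s x)
    refine this.congr_deriv ?_
    field_simp
    ring
  have hint : Integrable (fun x : ℝ =>
      x ^ 2 * Real.exp (-s * x ^ 2) - 1 / (2 * s) * Real.exp (-s * x ^ 2)) :=
    (integrable_sq_exp s hb).sub ((integrable_exp_neg_mul_sq hb).const_mul _)
  have htend : Tendsto (fun x : ℝ => -(x / (2 * s)) * Real.exp (-s * x ^ 2)) atTop (𝓝 0) := by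
    have := (tendsto_pow_mul_exp s hb 1).const_mul (-(1 / (2 * s)))
    simp only [mul_zero] at this
    apply this.congr
    intro x; ring
  have h0 := integral_Ioi_of_hasDerivAt_of_tendsto' (a := 0) (fun x _ => hF x)
    hint.integrableOn htend
  simp only [zero_div, neg_zero, zero_mul, sub_zero] at h0
  rw [integral_sub ((integrable_sq_exp s hb).integrableOn)
    (((integrable_exp_neg_mul_sq hb).const_mul _).integrableOn)] at h0
  have h1 : ∫ x in Ioi (0:ℝ), 1 / (2 * s) * Real.exp (-s * x ^ 2)
      = 1 / (2 * s) * (Real.sqrt (π / s) / 2) := by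
    rw [integral_const_mul, integral_Ioi_exp s hb]
  have h2 : ∫ x in Ioi (0:ℝ), x ^ 2 * Real.exp (-s * x ^ 2)
      = Real.sqrt (π / s) / (4 * s) := by
    have := sub_eq_zero.mp (by linarith [h0] : (∫ x in Ioi (0:ℝ), x ^ 2 * Real.exp (-s * x ^ 2)) - ∫ x in Ioi (0:ℝ), 1 / (2 * s) * Real.exp (-s * x ^ 2) = 0)
    rw [this, h1]
    ring
  have h : (∫ x : ℝ, x ^ 2 * Real.exp (-s * x ^ 2))
      = ∫ x : ℝ, (fun t : ℝ => t ^ 2 * Real.exp (-s * t ^ 2)) |x| := by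
    congr 1; funext x; simp [sq_abs]
  rw [h, integral_comp_abs (f := fun t : ℝ => t ^ 2 * Real.exp (-s * t ^ 2)), h2]
  ring

lemma exp_neg_lt_one (s : ℝ) (hb : 0 < s) : Real.exp (-s) < 1 := by
  calc Real.exp (-s) < Real.exp 0 := Real.exp_lt_exp.mpr (by linarith)
    _ = 1 := Real.exp_zero

lemma exp_sq_le_geom (s : ℝ) (hb : 0 < s) (n : ℕ) :
    Real.exp (-s * (n : ℝ) ^ 2) ≤ Real.exp (-s) ^ n := by
  rw [← Real.exp_nat_mul]
  apply Real.exp_le_exp.mpr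
  have h1 : (n : ℝ) ≤ (n : ℝ) ^ 2 := by
    have := Nat.le_self_pow (two_ne_zero) n
    exact_mod_cast this
  nlinarith

lemma summable_exp_nat (s : ℝ) (hb : 0 < s) :
    Summable fun n : ℕ => Real.exp (-s * (n : ℝ) ^ 2) := by
  apply Summable.of_nonneg_of_le (fun n => (Real.exp_pos _).le) (exp_sq_le_geom s hb)
  exact summable_geometric_of_lt_one (Real.exp_pos _).le (exp_neg_lt_one s hb)

lemma summable_exp_int (s : ℝ) (hb : 0 < s) :
    Summable fun k : ℤ => Real.exp (-s * (k : ℝ) ^ 2) := by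
  apply Summable.of_nat_of_neg
  · simpa using summable_exp_nat s hb
  · simpa using summable_exp_nat s hb

lemma summable_sq_exp_nat (s : ℝ) (hb : 0 < s) :
    Summable fun n : ℕ => (n : ℝ) ^ 2 * Real.exp (-s * (n : ℝ) ^ 2) := by
  apply Summable.of_nonneg_of_le
    (fun n => mul_nonneg (sq_nonneg _) (Real.exp_pos _).le)
    (fun n => ?_)
    (summable_pow_mul_geometric_of_norm_lt_one 2
      (r := Real.exp (-s)) (by rw [Real.norm_eq_abs, abs_of_pos (Real.exp_pos _)]; exact exp_neg_lt_one s hb))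
  exact mul_le_mul_of_nonneg_left (exp_sq_le_geom s hb n) (sq_nonneg _)

lemma summable_sq_exp_int (s : ℝ) (hb : 0 < s) :
    Summable fun k : ℤ => (k : ℝ) ^ 2 * Real.exp (-s * (k : ℝ) ^ 2) := by
  apply Summable.of_nat_of_neg
  · simpa using summable_sq_exp_nat s hb
  · simpa using summable_sq_exp_nat s hb

def Tf (s : ℝ) : ℝ := ∑' k : ℤ, Real.exp (-s * (k : ℝ) ^ 2)
def Uf (s : ℝ) : ℝ := ∑' k : ℤ, (k : ℝ) ^ 2 * Real.exp (-s * (k : ℝ) ^ 2)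

lemma Tf_bound (s : ℝ) (hb : 0 < s) : |Tf s - Real.sqrt (π / s)| ≤ 2 := by
  have hg' : Integrable (fun x : ℝ => -s * (2 * x) * Real.exp (-s * x ^ 2)) := by
    have := (integrable_mul_exp_neg_mul_sq hb).const_mul (-(2 * s))
    apply this.congr
    filter_upwards with x
    ring
  have key := abs_tsum_sub_integral_le (fun x => Real.exp (-s * x ^ 2))
    (fun x => -s * (2 * x) * Real.exp (-s * x ^ 2)) (hasDerivAt_E s)
    (integrable_exp_neg_mul_sq hb) hg' (summable_exp_int s hb)
  rw [integral_gaussian] at key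
  have habs : (∫ x : ℝ, |(-s * (2 * x)) * Real.exp (-s * x ^ 2)|) = 2 := by
    have h1 : (∫ x : ℝ, |(-s * (2 * x)) * Real.exp (-s * x ^ 2)|)
        = ∫ x : ℝ, (2 * s) * (|x| * Real.exp (-s * x ^ 2)) := by
      congr 1; funext x
      rw [abs_mul, abs_of_pos (Real.exp_pos _)]
      rw [abs_mul, abs_neg, abs_of_pos hb, abs_mul, abs_of_nonneg (by norm_num : (0:ℝ) ≤ 2)]
      ring
    rw [h1, integral_const_mul, integral_abs_mul_exp s hb]
    field_simp
  rw [habs] at key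
  exact key

lemma Uf_bound (s : ℝ) (hb : 0 < s) : |Uf s - Real.sqrt (π / s) / (2 * s)| ≤ 4 / s := by
  have hd : ∀ x : ℝ, HasDerivAt (fun x : ℝ => x ^ 2 * Real.exp (-s * x ^ 2))
      (2 * x * Real.exp (-s * x ^ 2) - 2 * s * x ^ 3 * Real.exp (-s * x ^ 2)) x := by
    intro x
    have := (hasDerivAt_pow 2 x).mul (hasDerivAt_E s x)
    refine this.congr_deriv ?_
    ring
  have hg' : Integrable (fun x : ℝ =>
      2 * x * Real.exp (-s * x ^ 2) - 2 * s * x ^ 3 * Real.exp (-s * x ^ 2)) := by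
    have := ((integrable_mul_exp_neg_mul_sq hb).const_mul 2).sub
      ((integrable_cube_exp s hb).const_mul (2 * s))
    apply this.congr
    filter_upwards with x
    simp only [Pi.sub_apply]
    ring
  have key := abs_tsum_sub_integral_le (fun x => x ^ 2 * Real.exp (-s * x ^ 2)) _
    hd (integrable_sq_exp s hb) hg' (summable_sq_exp_int s hb)
  rw [integral_sq_exp s hb] at key
  have hboundInt : Integrable (fun x : ℝ =>
      2 * (|x| * Real.exp (-s * x ^ 2)) + 2 * s * (|x| ^ 3 * Real.exp (-s * x ^ 2))) := by
    have h1 : Integrable (fun x : ℝ => |x| * Real.exp (-s * x ^ 2)) := by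
      have := (integrable_mul_exp_neg_mul_sq hb).abs
      apply this.congr
      filter_upwards with x
      rw [abs_mul, abs_of_pos (Real.exp_pos _)]
    have h3 : Integrable (fun x : ℝ => |x| ^ 3 * Real.exp (-s * x ^ 2)) := by
      have := (integrable_cube_exp s hb).abs
      apply this.congr
      filter_upwards with x
      rw [abs_mul, abs_of_pos (Real.exp_pos _), abs_pow]
    exact (h1.const_mul 2).add (h3.const_mul (2 * s))
  have hmono : (∫ x : ℝ, |2 * x * Real.exp (-s * x ^ 2) - 2 * s * x ^ 3 * Real.exp (-s * x ^ 2)|)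
      ≤ ∫ x : ℝ, (2 * (|x| * Real.exp (-s * x ^ 2)) + 2 * s * (|x| ^ 3 * Real.exp (-s * x ^ 2))) := by
    apply integral_mono hg'.abs hboundInt
    intro x
    have h1 : |2 * x * Real.exp (-s * x ^ 2)| = 2 * (|x| * Real.exp (-s * x ^ 2)) := by
      rw [abs_mul, abs_mul, abs_of_nonneg (by norm_num : (0:ℝ) ≤ 2),
        abs_of_pos (Real.exp_pos _)]
      ring
    have h2 : |2 * s * x ^ 3 * Real.exp (-s * x ^ 2)| = 2 * s * (|x| ^ 3 * Real.exp (-s * x ^ 2)) := by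
      rw [abs_mul, abs_mul, abs_mul, abs_of_nonneg (by norm_num : (0:ℝ) ≤ 2),
        abs_of_pos hb, abs_of_pos (Real.exp_pos _), abs_pow]
      ring
    calc |2 * x * Real.exp (-s * x ^ 2) - 2 * s * x ^ 3 * Real.exp (-s * x ^ 2)|
        ≤ |2 * x * Real.exp (-s * x ^ 2)| + |2 * s * x ^ 3 * Real.exp (-s * x ^ 2)| :=
          abs_sub _ _
      _ = _ := by rw [h1, h2]
  have hval : (∫ x : ℝ, (2 * (|x| * Real.exp (-s * x ^ 2))
      + 2 * s * (|x| ^ 3 * Real.exp (-s * x ^ 2)))) = 4 / s := by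
    have h1 : Integrable (fun x : ℝ => |x| * Real.exp (-s * x ^ 2)) := by
      have := (integrable_mul_exp_neg_mul_sq hb).abs
      apply this.congr
      filter_upwards with x
      rw [abs_mul, abs_of_pos (Real.exp_pos _)]
    have h3 : Integrable (fun x : ℝ => |x| ^ 3 * Real.exp (-s * x ^ 2)) := by
      have := (integrable_cube_exp s hb).abs
      apply this.congr
      filter_upwards with x
      rw [abs_mul, abs_of_pos (Real.exp_pos _), abs_pow]
    rw [integral_add (h1.const_mul 2) (h3.const_mul (2 * s)), integral_const_mul,
      integral_const_mul, integral_abs_mul_exp s hb, integral_abs_cube_exp s hb]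
    field_simp
    ring
  calc |Uf s - Real.sqrt (π / s) / (2 * s)| ≤ _ := key
    _ ≤ _ := hmono
    _ = 4 / s := hval

lemma sqrt_tendsto_zero : Tendsto Real.sqrt (𝓝[>] (0:ℝ)) (𝓝 0) := by
  have := Real.continuous_sqrt.tendsto 0
  rw [Real.sqrt_zero] at this
  exact this.mono_left nhdsWithin_le_nhds

lemma sqrt_mul_sqrt_div (s : ℝ) (hs : 0 < s) :
    Real.sqrt s * Real.sqrt (π / s) = Real.sqrt π := by
  rw [← Real.sqrt_mul hs.le]
  congr 1
  field_simp

lemma squeeze_aux (f : ℝ → ℝ) (L : ℝ) (C : ℝ)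
    (hcl : ∀ s ∈ Ioi (0:ℝ), |f s - L| ≤ C * Real.sqrt s) :
    Tendsto f (𝓝[>] (0:ℝ)) (𝓝 L) := by
  have h2 : Tendsto (fun s : ℝ => C * Real.sqrt s) (𝓝[>] 0) (𝓝 0) := by
    simpa using sqrt_tendsto_zero.const_mul C
  have hlow : Tendsto (fun s : ℝ => L - C * Real.sqrt s) (𝓝[>] 0) (𝓝 L) := by
    have := (tendsto_const_nhds (x := L) (f := 𝓝[>] (0:ℝ))).sub h2
    simpa using this
  have hhigh : Tendsto (fun s : ℝ => L + C * Real.sqrt s) (𝓝[>] 0) (𝓝 L) := by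
    have := (tendsto_const_nhds (x := L) (f := 𝓝[>] (0:ℝ))).add h2
    simpa using this
  apply tendsto_of_tendsto_of_tendsto_of_le_of_le' hlow hhigh
  · filter_upwards [self_mem_nhdsWithin] with s hs
    have := abs_le.mp (hcl s hs)
    linarith [this.1]
  · filter_upwards [self_mem_nhdsWithin] with s hs
    have := abs_le.mp (hcl s hs)
    linarith [this.2]

lemma Tf_lim : Tendsto (fun s => Real.sqrt s * Tf s) (𝓝[>] (0:ℝ)) (𝓝 (Real.sqrt π)) := by
  apply squeeze_aux _ _ 2
  intro s hs
  have h1 := sqrt_mul_sqrt_div s hs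
  calc |Real.sqrt s * Tf s - Real.sqrt π|
      = Real.sqrt s * |Tf s - Real.sqrt (π / s)| := by
        rw [← h1, ← mul_sub, abs_mul, abs_of_nonneg (Real.sqrt_nonneg _)]
    _ ≤ Real.sqrt s * 2 := mul_le_mul_of_nonneg_left (Tf_bound s hs) (Real.sqrt_nonneg _)
    _ = 2 * Real.sqrt s := by ring

lemma Uf_lim : Tendsto (fun s => s * Real.sqrt s * Uf s) (𝓝[>] (0:ℝ)) (𝓝 (Real.sqrt π / 2)) := by
  apply squeeze_aux _ _ 4
  intro s hs
  have hs' : (0:ℝ) < s := hs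
  have h1 : s * Real.sqrt s * (Real.sqrt (π / s) / (2 * s)) = Real.sqrt π / 2 := by
    rw [show s * Real.sqrt s * (Real.sqrt (π / s) / (2 * s))
        = (Real.sqrt s * Real.sqrt (π / s)) * (s / (2 * s)) from by ring,
      sqrt_mul_sqrt_div s hs']
    rw [mul_comm (2:ℝ) s, ← div_div, div_self hs'.ne', one_div]
    rw [mul_comm]
    rw [div_eq_inv_mul]
  calc |s * Real.sqrt s * Uf s - Real.sqrt π / 2|
      = s * Real.sqrt s * |Uf s - Real.sqrt (π / s) / (2 * s)| := by
        rw [← h1, ← mul_sub, abs_mul, abs_of_nonneg (by positivity)]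
    _ ≤ s * Real.sqrt s * (4 / s) := mul_le_mul_of_nonneg_left (Uf_bound s hs') (by positivity)
    _ = 4 * Real.sqrt s := by field_simp

lemma E_lim (A : ℝ) (hA : 0 < A) :
    Tendsto (fun q : ℝ => Real.exp (-(A / q))) (𝓝[>] (0:ℝ)) (𝓝 0) := by
  apply Real.tendsto_exp_atBot.comp
  apply tendsto_neg_atTop_atBot.comp
  have h : Tendsto (fun q : ℝ => A * q⁻¹) (𝓝[>] (0:ℝ)) atTop :=
    tendsto_inv_nhdsGT_zero.const_mul_atTop hA
  apply h.congr
  intro q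
  rw [div_eq_mul_inv]

lemma scale_map (t : ℝ) (ht : 0 < t) :
    Tendsto (fun q : ℝ => t * q) (𝓝[>] (0:ℝ)) (𝓝[>] (0:ℝ)) := by
  apply tendsto_nhdsWithin_of_tendsto_nhds_of_eventually_within
  · have h := ((continuous_const (y := t)).mul continuous_id).tendsto (0:ℝ)
    simp only [Pi.mul_apply, id, mul_zero] at h
    exact h.mono_left nhdsWithin_le_nhds
  · filter_upwards [self_mem_nhdsWithin] with q hq
    exact mul_pos ht hq

end AuxLemmas

/-- The coefficients `c_k(h,q) = √(1-exp(-(2h²/(1-h))(qk²+1/q)))·exp(-hqk²-h/q)`. -/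
def ck (h q : ℝ) (k : ℤ) : ℝ :=
  Real.sqrt (1 - Real.exp (-(2 * h ^ 2 / (1 - h) * (q * (k:ℝ) ^ 2 + 1 / q)))) *
    Real.exp (-(h * q * (k:ℝ) ^ 2) - h / q)

/-- For fixed `h ∈ (0,1/2]`, `q · (∑ₖ k²c_k²)/(∑ₖ c_k²) → 1/(4h)` as `q → 0⁺`. -/
theorem freq_ratio_tendsto_q (h : ℝ) (hh : h ∈ Set.Ioc (0:ℝ) (1/2)) :
    Tendsto (fun q : ℝ =>
        q * ((∑' k : ℤ, (k:ℝ) ^ 2 * ck h q k ^ 2) / (∑' k : ℤ, ck h q k ^ 2)))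
      (nhdsWithin 0 (Set.Ioi 0)) (nhds (1 / (4 * h))) := by
  obtain ⟨hh0, hh2⟩ := hh
  have h1h : (0:ℝ) < 1 - h := by linarith
  set t1 : ℝ := 2 * h with ht1def
  set t2 : ℝ := 2 * h / (1 - h) with ht2def
  set A : ℝ := 2 * h ^ 2 / (1 - h) with hAdef
  have ht1 : 0 < t1 := by positivity
  have ht2 : 0 < t2 := by positivity
  have hA : 0 < A := by positivity
  have hst1 : (0:ℝ) < Real.sqrt t1 := Real.sqrt_pos.mpr ht1
  have hst2 : (0:ℝ) < Real.sqrt t2 := Real.sqrt_pos.mpr ht2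
  -- the auxiliary functions
  set num : ℝ → ℝ := fun q => 1 / t1 * (t1 * q * Real.sqrt (t1 * q) * Uf (t1 * q)) -
      Real.exp (-(A / q)) * (Real.sqrt t1 / (t2 * Real.sqrt t2)) *
        (t2 * q * Real.sqrt (t2 * q) * Uf (t2 * q)) with hnumdef
  set den : ℝ → ℝ := fun q => Real.sqrt (t1 * q) * Tf (t1 * q) -
      Real.exp (-(A / q)) * (Real.sqrt t1 / Real.sqrt t2) *
        (Real.sqrt (t2 * q) * Tf (t2 * q)) with hdendef
  -- limits
  have hnum_lim : Tendsto num (𝓝[>] (0:ℝ)) (𝓝 (1 / t1 * (Real.sqrt π / 2))) := by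
    have h1 : Tendsto (fun q : ℝ => t1 * q * Real.sqrt (t1 * q) * Uf (t1 * q))
        (𝓝[>] (0:ℝ)) (𝓝 (Real.sqrt π / 2)) := Uf_lim.comp (scale_map t1 ht1)
    have h2 : Tendsto (fun q : ℝ => t2 * q * Real.sqrt (t2 * q) * Uf (t2 * q))
        (𝓝[>] (0:ℝ)) (𝓝 (Real.sqrt π / 2)) := Uf_lim.comp (scale_map t2 ht2)
    have h3 := ((E_lim A hA).mul_const (Real.sqrt t1 / (t2 * Real.sqrt t2))).mul h2
    simp only [zero_mul] at h3
    have h4 := (h1.const_mul (1 / t1)).sub h3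
    rw [hnumdef]
    simpa only [sub_zero] using h4
  have hden_lim : Tendsto den (𝓝[>] (0:ℝ)) (𝓝 (Real.sqrt π)) := by
    have h1 : Tendsto (fun q : ℝ => Real.sqrt (t1 * q) * Tf (t1 * q))
        (𝓝[>] (0:ℝ)) (𝓝 (Real.sqrt π)) := Tf_lim.comp (scale_map t1 ht1)
    have h2 : Tendsto (fun q : ℝ => Real.sqrt (t2 * q) * Tf (t2 * q))
        (𝓝[>] (0:ℝ)) (𝓝 (Real.sqrt π)) := Tf_lim.comp (scale_map t2 ht2)
    have h3 := ((E_lim A hA).mul_const (Real.sqrt t1 / Real.sqrt t2)).mul h2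
    simp only [zero_mul] at h3
    have h4 := h1.sub h3
    rw [hdendef]
    simpa only [sub_zero] using h4
  have hratio : Tendsto (fun q => num q / den q) (𝓝[>] (0:ℝ)) (𝓝 (1 / (4 * h))) := by
    have hπ : Real.sqrt π ≠ 0 := (Real.sqrt_pos.mpr pi_pos).ne'
    have := hnum_lim.div hden_lim hπ
    have hval : 1 / t1 * (Real.sqrt π / 2) / Real.sqrt π = 1 / (4 * h) := by
      rw [ht1def]
      field_simp
      ring
    rwa [hval] at this
  -- eventual equality
  apply hratio.congr'
  filter_upwards [self_mem_nhdsWithin] with q hq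
  have hq' : (0:ℝ) < q := hq
  have ht1q : (0:ℝ) < t1 * q := by positivity
  have ht2q : (0:ℝ) < t2 * q := by positivity
  -- pointwise identity for ck squared
  have hck : ∀ k : ℤ, ck h q k ^ 2 =
      Real.exp (-(t1 / q)) * Real.exp (-(t1 * q) * (k:ℝ) ^ 2) -
      Real.exp (-(t2 / q)) * Real.exp (-(t2 * q) * (k:ℝ) ^ 2) := by
    intro k
    have hnn : 0 ≤ 1 - Real.exp (-(2 * h ^ 2 / (1 - h) * (q * (k:ℝ) ^ 2 + 1 / q))) := by
      have hle : Real.exp (-(2 * h ^ 2 / (1 - h) * (q * (k:ℝ) ^ 2 + 1 / q))) ≤ Real.exp 0 := by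
        apply Real.exp_le_exp.mpr
        apply neg_nonpos.mpr
        exact mul_nonneg (div_nonneg (by positivity) h1h.le) (by positivity)
      rw [Real.exp_zero] at hle
      linarith
    rw [ck, mul_pow, Real.sq_sqrt hnn, sub_mul, one_mul]
    simp only [pow_two, ← Real.exp_add]
    congr 1
    · congr 1
      rw [ht1def]
      field_simp
      ring
    · congr 1
      rw [ht2def]
      field_simp [h1h.ne', hq'.ne']
      ring
  -- tsum identities
  have hsum1T := (summable_exp_int (t1 * q) ht1q).mul_left (Real.exp (-(t1 / q)))
  have hsum2T := (summable_exp_int (t2 * q) ht2q).mul_left (Real.exp (-(t2 / q)))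
  have hsum1U := (summable_sq_exp_int (t1 * q) ht1q).mul_left (Real.exp (-(t1 / q)))
  have hsum2U := (summable_sq_exp_int (t2 * q) ht2q).mul_left (Real.exp (-(t2 / q)))
  have hD : (∑' k : ℤ, ck h q k ^ 2) =
      Real.exp (-(t1 / q)) * Tf (t1 * q) - Real.exp (-(t2 / q)) * Tf (t2 * q) := by
    rw [show (fun k : ℤ => ck h q k ^ 2) = fun k : ℤ =>
        (Real.exp (-(t1 / q)) * Real.exp (-(t1 * q) * (k:ℝ) ^ 2) -
         Real.exp (-(t2 / q)) * Real.exp (-(t2 * q) * (k:ℝ) ^ 2)) from funext hck]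
    rw [Summable.tsum_sub hsum1T hsum2T, tsum_mul_left, tsum_mul_left]
    rfl
  have hN : (∑' k : ℤ, (k:ℝ) ^ 2 * ck h q k ^ 2) =
      Real.exp (-(t1 / q)) * Uf (t1 * q) - Real.exp (-(t2 / q)) * Uf (t2 * q) := by
    have heq : (fun k : ℤ => (k:ℝ) ^ 2 * ck h q k ^ 2) = fun k : ℤ =>
        (Real.exp (-(t1 / q)) * ((k:ℝ) ^ 2 * Real.exp (-(t1 * q) * (k:ℝ) ^ 2)) -
         Real.exp (-(t2 / q)) * ((k:ℝ) ^ 2 * Real.exp (-(t2 * q) * (k:ℝ) ^ 2))) := by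
      funext k
      rw [hck k]
      ring
    rw [heq, Summable.tsum_sub hsum1U hsum2U, tsum_mul_left, tsum_mul_left]
    rfl
  -- multiply by c
  set c : ℝ := Real.exp (t1 / q) * Real.sqrt (t1 * q) with hcdef
  have hc : c ≠ 0 := by
    rw [hcdef]
    positivity
  have hexp1 : Real.exp (t1 / q) * Real.exp (-(t1 / q)) = 1 := by
    rw [← Real.exp_add]
    simp
  have hexp2 : Real.exp (t1 / q) * Real.exp (-(t2 / q)) = Real.exp (-(A / q)) := by
    rw [← Real.exp_add]
    congr 1
    rw [ht1def, ht2def, hAdef]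
    field_simp [h1h.ne', hq'.ne']
    ring
  have hsq1 : Real.sqrt (t1 * q) = Real.sqrt t1 * Real.sqrt q := Real.sqrt_mul ht1.le q
  have hsq2 : Real.sqrt (t2 * q) = Real.sqrt t2 * Real.sqrt q := Real.sqrt_mul ht2.le q
  have hdenc : den q = c * ((∑' k : ℤ, ck h q k ^ 2)) := by
    simp only [hdendef]
    rw [hD, hcdef, mul_sub]
    congr 1
    · rw [show Real.exp (t1 / q) * Real.sqrt (t1 * q) * (Real.exp (-(t1 / q)) * Tf (t1 * q))
          = (Real.exp (t1 / q) * Real.exp (-(t1 / q))) * (Real.sqrt (t1 * q) * Tf (t1 * q))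
          from by ring, hexp1, one_mul]
    · rw [show Real.exp (t1 / q) * Real.sqrt (t1 * q) * (Real.exp (-(t2 / q)) * Tf (t2 * q))
          = (Real.exp (t1 / q) * Real.exp (-(t2 / q))) * (Real.sqrt (t1 * q) * Tf (t2 * q))
          from by ring, hexp2, hsq1, hsq2]
      field_simp
  have hnumc : num q = c * (q * (∑' k : ℤ, (k:ℝ) ^ 2 * ck h q k ^ 2)) := by
    simp only [hnumdef]
    rw [hN, hcdef, mul_sub, mul_sub]
    congr 1
    · rw [show Real.exp (t1 / q) * Real.sqrt (t1 * q) * (q * (Real.exp (-(t1 / q)) * Uf (t1 * q)))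
          = (Real.exp (t1 / q) * Real.exp (-(t1 / q))) * (q * Real.sqrt (t1 * q) * Uf (t1 * q))
          from by ring, hexp1, one_mul]
      field_simp
    · rw [show Real.exp (t1 / q) * Real.sqrt (t1 * q) * (q * (Real.exp (-(t2 / q)) * Uf (t2 * q)))
          = (Real.exp (t1 / q) * Real.exp (-(t2 / q))) * (q * Real.sqrt (t1 * q) * Uf (t2 * q))
          from by ring, hexp2, hsq1, hsq2]
      field_simp
  rw [hnumc, hdenc, mul_div_mul_left _ _ hc, mul_div_assoc]
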